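/- arXiv:2404.15688 — 7 statements merged into one kernel-verified Lean document; each statement's English description precedes it below -/
import Mathlib

section
/- Let x ∈ ℝ^p, y ∈ ℝ^q, z ∈ ℝ^r. Then the semi-tensor addition is associative up to the equivalence x ↔ y (defined by: x ↔ y iff there exist all-ones vectors 1_i, 1_j with x ⊗ 1_i = y ⊗ 1_j): (x ⊞ y) ⊞ z ↔ x ⊞ (y ⊞ z). -/
noncomputable section

/-- `x ⊗ 1ₖ` : the vector obtained from `x ∈ ℝ^p` by repeating each entry
exactly `k` times consecutively. -/
def rep {p : ℕ} (k : ℕ) (x : Fin p → ℝ) : Fin (p * k) → ℝ :=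
  fun i => x ⟨(i : ℕ) / k, Nat.div_lt_of_lt_mul (lt_of_lt_of_eq i.isLt (Nat.mul_comm p k))⟩

/-- Transport a vector along an equality of dimensions. -/
def recast {a b : ℕ} (h : a = b) (x : Fin a → ℝ) : Fin b → ℝ :=
  fun i => x (Fin.cast h.symm i)

/-- Semi-tensor addition: `x ⊞ y = (x ⊗ 1_{t/p}) + (y ⊗ 1_{t/q}) ∈ ℝ^t`,
`t = lcm(p,q)`. -/
def stpAdd {p q : ℕ} (x : Fin p → ℝ) (y : Fin q → ℝ) : Fin (Nat.lcm p q) → ℝ :=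
  recast (Nat.mul_div_cancel' (Nat.dvd_lcm_left p q)) (rep (Nat.lcm p q / p) x)
    + recast (Nat.mul_div_cancel' (Nat.dvd_lcm_right p q)) (rep (Nat.lcm p q / q) y)

/-- The equivalence `x ↔ y` : there are all-ones vectors `1ᵢ, 1ⱼ` with
`x ⊗ 1ᵢ = y ⊗ 1ⱼ` (as elements of `⋃ₙ ℝⁿ`). -/
def vEquiv (u v : Σ n : ℕ, Fin n → ℝ) : Prop :=
  ∃ i j : ℕ, 0 < i ∧ 0 < j ∧
    (⟨u.1 * i, rep i u.2⟩ : Σ n : ℕ, Fin n → ℝ) = ⟨v.1 * j, rep j v.2⟩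

lemma divHelper {n L l p : ℕ} (h1 : p ∣ l) (h2 : l ∣ L) :
    n / (L / l) / (l / p) = n / (L / p) := by
  rw [Nat.div_div_eq_div_mul]
  congr 1
  obtain ⟨a, rfl⟩ := h1
  obtain ⟨b, rfl⟩ := h2
  rcases Nat.eq_zero_or_pos p with rfl | hp
  · simp
  rcases Nat.eq_zero_or_pos a with rfl | ha
  · simp
  rw [Nat.mul_div_cancel_left _ (Nat.mul_pos hp ha),
      Nat.mul_div_cancel_left _ hp,
      Nat.mul_assoc, Nat.mul_div_cancel_left _ hp]
  ring

/-- Semi-tensor addition is associative up to the equivalence `↔`. -/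
theorem stpAdd_assoc {p q r : ℕ} (hp : 0 < p) (hq : 0 < q) (hr : 0 < r)
    (x : Fin p → ℝ) (y : Fin q → ℝ) (z : Fin r → ℝ) :
    vEquiv ⟨Nat.lcm (Nat.lcm p q) r, stpAdd (stpAdd x y) z⟩
      ⟨Nat.lcm p (Nat.lcm q r), stpAdd x (stpAdd y z)⟩ := by
  refine ⟨1, 1, one_pos, one_pos, ?_⟩
  have hdim : Nat.lcm (Nat.lcm p q) r * 1 = Nat.lcm p (Nat.lcm q r) * 1 := by
    rw [Nat.lcm_assoc]
  refine Sigma.ext hdim ?_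
  rw [Fin.heq_fun_iff hdim]
  intro i
  simp only [rep, recast, stpAdd, Pi.add_apply, Fin.coe_cast, Nat.div_one,
    divHelper (Nat.dvd_lcm_left p q) (Nat.dvd_lcm_left (Nat.lcm p q) r),
    divHelper (Nat.dvd_lcm_right p q) (Nat.dvd_lcm_left (Nat.lcm p q) r),
    divHelper (Nat.dvd_lcm_left q r) (Nat.dvd_lcm_right p (Nat.lcm q r)),
    divHelper (Nat.dvd_lcm_right q r) (Nat.dvd_lcm_right p (Nat.lcm q r))]
  rw [add_assoc]
  simp only [Nat.lcm_assoc]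
end
end

section
/- Let x ∈ ℝ^p, y ∈ ℝ^q, t = lcm(p,q), and define ⟨x,y⟩_V := (1/t)⟨x ⊗ 1_{t/p}, y ⊗ 1_{t/q}⟩, where ⟨·,·⟩ is the standard inner product on ℝ^t. Then ⟨x,y⟩_V is well-defined on equivalence classes: if x ↔ x' and y ↔ y' then ⟨x,y⟩_V = ⟨x',y'⟩_V. -/
noncomputable section

/-- The dimension-free inner product
`⟨x,y⟩_V = (1/t)⟨x ⊗ 1_{t/p}, y ⊗ 1_{t/q}⟩`, `t = lcm(p,q)`. -/
def vInner {p q : ℕ} (x : Fin p → ℝ) (y : Fin q → ℝ) : ℝ :=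
  (1 / (Nat.lcm p q : ℝ)) *
    ∑ i : Fin (Nat.lcm p q),
      recast (Nat.mul_div_cancel' (Nat.dvd_lcm_left p q)) (rep (Nat.lcm p q / p) x) i *
      recast (Nat.mul_div_cancel' (Nat.dvd_lcm_right p q)) (rep (Nat.lcm p q / q) y) i

/-- Extend a finite vector to `ℕ → ℝ` by zero. -/
def ext {p : ℕ} (x : Fin p → ℝ) : ℕ → ℝ := fun n => if h : n < p then x ⟨n, h⟩ else 0

/-- Abstract form of the inner product sum. -/
def J (p q t : ℕ) (X Y : ℕ → ℝ) : ℝ :=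
  (1 / (t : ℝ)) * ∑ i ∈ Finset.range t, X (i / (t / p)) * Y (i / (t / q))

lemma vInner_eq_J {p q : ℕ} (hp : 0 < p) (hq : 0 < q) (x : Fin p → ℝ) (y : Fin q → ℝ) :
    vInner x y = J p q (Nat.lcm p q) (ext x) (ext y) := by
  rw [vInner, J]
  congr 1
  rw [← Fin.sum_univ_eq_sum_range
    (fun n => ext x (n / (Nat.lcm p q / p)) * ext y (n / (Nat.lcm p q / q))) (Nat.lcm p q)]
  apply Finset.sum_congr rfl
  intro i _
  have hi : (i : ℕ) < Nat.lcm p q := i.isLt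
  have h1 : (i : ℕ) / (Nat.lcm p q / p) < p := by
    apply Nat.div_lt_of_lt_mul
    calc (i : ℕ) < Nat.lcm p q := hi
    _ = Nat.lcm p q / p * p := (Nat.div_mul_cancel (Nat.dvd_lcm_left p q)).symm
  have h2 : (i : ℕ) / (Nat.lcm p q / q) < q := by
    apply Nat.div_lt_of_lt_mul
    calc (i : ℕ) < Nat.lcm p q := hi
    _ = Nat.lcm p q / q * q := (Nat.div_mul_cancel (Nat.dvd_lcm_right p q)).symm
  simp [recast, rep, ext, h1, h2]

lemma sum_range_mul_div (s m : ℕ) (hm : 0 < m) (g : ℕ → ℝ) :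
    ∑ i ∈ Finset.range (s * m), g (i / m) = m * ∑ j ∈ Finset.range s, g j := by
  induction s with
  | zero => simp
  | succ s ih =>
    have h : (s + 1) * m = s * m + m := by ring
    rw [h, Finset.range_eq_Ico, ← Finset.sum_Ico_consecutive _ (Nat.zero_le _)
      (Nat.le_add_right _ m), ← Finset.range_eq_Ico, ih]
    have hc : ∀ i ∈ Finset.Ico (s * m) (s * m + m), g (i / m) = g s := by
      intro i hi
      simp only [Finset.mem_Ico] at hi
      congr 1
      have : i < (s + 1) * m := by omega
      exact Nat.div_eq_of_lt_le hi.1 this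
    rw [Finset.sum_congr rfl hc, Finset.sum_const, Nat.card_Ico, Finset.sum_range_succ]
    simp
    ring

/-- `J` is invariant under scaling `t` by a positive factor. -/
lemma J_scale (p q t m : ℕ) (hp : p ∣ t) (hq : q ∣ t) (ht : 0 < t) (hm : 0 < m)
    (X Y : ℕ → ℝ) : J p q (t * m) X Y = J p q t X Y := by
  have e1 : t * m / p = t / p * m := by
    rw [Nat.mul_comm t m, Nat.mul_div_assoc m hp, Nat.mul_comm]
  have e2 : t * m / q = t / q * m := by
    rw [Nat.mul_comm t m, Nat.mul_div_assoc m hq, Nat.mul_comm]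
  rw [J, J, e1, e2]
  have key : ∀ i : ℕ, X (i / (t / p * m)) * Y (i / (t / q * m)) =
      (fun j => X (j / (t / p)) * Y (j / (t / q))) (i / m) := by
    intro i
    simp only
    rw [Nat.mul_comm (t / p) m, Nat.mul_comm (t / q) m, ← Nat.div_div_eq_div_mul,
      ← Nat.div_div_eq_div_mul]
  have hsum : ∑ i ∈ Finset.range (t * m), X (i / (t / p * m)) * Y (i / (t / q * m)) =
      (m : ℝ) * ∑ j ∈ Finset.range t, X (j / (t / p)) * Y (j / (t / q)) := by
    rw [← sum_range_mul_div t m hm (fun j => X (j / (t / p)) * Y (j / (t / q)))]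
    exact Finset.sum_congr rfl (fun i _ => key i)
  rw [hsum]
  have ht' : (t : ℝ) ≠ 0 := Nat.cast_ne_zero.mpr ht.ne'
  have hm' : (m : ℝ) ≠ 0 := Nat.cast_ne_zero.mpr hm.ne'
  push_cast
  field_simp

lemma ext_rep {p k : ℕ} (hk : 0 < k) (x : Fin p → ℝ) (n : ℕ) :
    ext (rep k x) n = ext x (n / k) := by
  simp only [ext, rep]
  by_cases h : n < p * k
  · have h' : n / k < p := Nat.div_lt_of_lt_mul (by rwa [Nat.mul_comm])
    simp [h, h']
  · have h' : ¬ n / k < p := by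
      rw [Nat.div_lt_iff_lt_mul hk]
      exact h
    simp [h, h']

/-- Repeating the left argument does not change `vInner`. -/
lemma vInner_rep_left {p q : ℕ} (hp : 0 < p) (hq : 0 < q) {k : ℕ} (hk : 0 < k)
    (x : Fin p → ℝ) (y : Fin q → ℝ) : vInner (rep k x) y = vInner x y := by
  have hpk : 0 < p * k := Nat.mul_pos hp hk
  rw [vInner_eq_J hpk hq, vInner_eq_J hp hq]
  set t := Nat.lcm (p * k) q with ht
  have ht0 : 0 < t := Nat.pos_of_ne_zero (Nat.lcm_ne_zero hpk.ne' hq.ne')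
  have hpkd : p * k ∣ t := Nat.dvd_lcm_left _ _
  have hpd : p ∣ t := dvd_trans ⟨k, rfl⟩ hpkd
  have hqd : q ∣ t := Nat.dvd_lcm_right _ _
  have hkd : k ∣ t / p := (Nat.dvd_div_iff_mul_dvd hpd).mpr hpkd
  have h1 : t / (p * k) * k = t / p := by
    rw [← Nat.div_div_eq_div_mul, Nat.div_mul_cancel hkd]
  have step1 : J (p * k) q t (ext (rep k x)) (ext y) = J p q t (ext x) (ext y) := by
    rw [J, J]
    congr 1
    apply Finset.sum_congr rfl
    intro i _
    rw [ext_rep hk]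
    congr 2
    rw [Nat.div_div_eq_div_mul, h1]
  rw [step1]
  have hdvd : Nat.lcm p q ∣ t := Nat.lcm_dvd hpd hqd
  obtain ⟨m, hm⟩ := hdvd
  have hl0 : 0 < Nat.lcm p q := Nat.pos_of_ne_zero (Nat.lcm_ne_zero hp.ne' hq.ne')
  have hm0 : 0 < m := by
    rcases Nat.eq_zero_or_pos m with h | h
    · rw [h, Nat.mul_zero] at hm; omega
    · exact h
  rw [hm]
  exact J_scale p q (Nat.lcm p q) m (Nat.dvd_lcm_left p q) (Nat.dvd_lcm_right p q) hl0 hm0 _ _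

lemma vInner_comm {p q : ℕ} (hp : 0 < p) (hq : 0 < q) (x : Fin p → ℝ) (y : Fin q → ℝ) :
    vInner x y = vInner y x := by
  rw [vInner_eq_J hp hq, vInner_eq_J hq hp, J, J, Nat.lcm_comm q p]
  congr 1
  exact Finset.sum_congr rfl (fun i _ => mul_comm _ _)

lemma vInner_congr_left {a b q : ℕ} (h : a = b) {u : Fin a → ℝ} {v : Fin b → ℝ}
    (huv : HEq u v) (y : Fin q → ℝ) : vInner u y = vInner v y := by
  subst h
  rw [eq_of_heq huv]

/-- `⟨·,·⟩_V` is well defined on equivalence classes of `↔`. -/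
theorem vInner_well_defined {p q p' q' : ℕ}
    (hp : 0 < p) (hq : 0 < q) (hp' : 0 < p') (hq' : 0 < q')
    (x : Fin p → ℝ) (y : Fin q → ℝ) (x' : Fin p' → ℝ) (y' : Fin q' → ℝ)
    (hx : vEquiv ⟨p, x⟩ ⟨p', x'⟩) (hy : vEquiv ⟨q, y⟩ ⟨q', y'⟩) :
    vInner x y = vInner x' y' := by
  obtain ⟨i, j, hi, hj, hxe⟩ := hx
  obtain ⟨a, b, ha, hb, hye⟩ := hy
  simp only at hxe hye
  have hd1 : p * i = p' * j := congrArg Sigma.fst hxe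
  have hf1 : HEq (rep i x) (rep j x') := by
    rw [Sigma.mk.inj_iff] at hxe; exact hxe.2
  have hd2 : q * a = q' * b := congrArg Sigma.fst hye
  have hf2 : HEq (rep a y) (rep b y') := by
    rw [Sigma.mk.inj_iff] at hye; exact hye.2
  calc vInner x y = vInner (rep i x) y := (vInner_rep_left hp hq hi x y).symm
    _ = vInner (rep j x') y := vInner_congr_left hd1 hf1 y
    _ = vInner x' y := vInner_rep_left hp' hq hj x' y
    _ = vInner y x' := vInner_comm hp' hq _ _
    _ = vInner (rep a y) x' := (vInner_rep_left hq hp' ha y x').symm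
    _ = vInner (rep b y') x' := vInner_congr_left hd2 hf2 x'
    _ = vInner y' x' := vInner_rep_left hq' hp' hb y' x'
    _ = vInner x' y' := vInner_comm hq' hp' _ _
end
end

section
/- Define d_V(x,y) := ‖x ⊞ (-y)‖_V where ‖z‖_V := √⟨z,z⟩_V. For x, y ∈ ⋃_n ℝ^n, d_V(x,y) = 0 if and only if x ↔ y. -/
noncomputable section

/-- `x ⊞ (-y) = x ⊗ 1_{t/p} - y ⊗ 1_{t/q}`. -/
def stpSub {p q : ℕ} (x : Fin p → ℝ) (y : Fin q → ℝ) : Fin (Nat.lcm p q) → ℝ :=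
  recast (Nat.mul_div_cancel' (Nat.dvd_lcm_left p q)) (rep (Nat.lcm p q / p) x)
    - recast (Nat.mul_div_cancel' (Nat.dvd_lcm_right p q)) (rep (Nat.lcm p q / q) y)

/-- `d_V(x,y) = ‖x ⊞ (-y)‖_V` where `‖z‖_V = √⟨z,z⟩_V`. -/
def dV {p q : ℕ} (x : Fin p → ℝ) (y : Fin q → ℝ) : ℝ :=
  Real.sqrt (vInner (stpSub x y) (stpSub x y))

lemma recast_rfl {a : ℕ} (f : Fin a → ℝ) : recast rfl f = f := rfl
lemma recast_inj_heq {a b c : ℕ} (h : a = c) (h' : b = c) {f : Fin a → ℝ} {g : Fin b → ℝ}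
    (he : recast h f = recast h' g) : HEq f g := by
  subst h; subst h'; exact heq_of_eq he
lemma heq_to_recast {a b : ℕ} (h : a = b) {f : Fin a → ℝ} {g : Fin b → ℝ}
    (he : HEq f g) : recast h f = g := by
  subst h; rw [eq_of_heq he]; rfl
lemma vInner_self_nonneg {r : ℕ} (z : Fin r → ℝ) : 0 ≤ vInner z z := by
  unfold vInner
  apply mul_nonneg (by positivity)
  exact Finset.sum_nonneg fun i _ => mul_self_nonneg _
lemma vInner_self_eq_zero {r : ℕ} (hr : 0 < r) (z : Fin r → ℝ) :
    vInner z z = 0 ↔ z = 0 := by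
  have hL : 0 < Nat.lcm r r := Nat.pos_of_ne_zero (Nat.lcm_ne_zero hr.ne' hr.ne')
  constructor
  · intro h
    unfold vInner at h
    have h1 : (1 / (Nat.lcm r r : ℝ)) ≠ 0 := by positivity
    have hsum := (mul_eq_zero.mp h).resolve_left h1
    have hall : ∀ i : Fin (Nat.lcm r r),
        recast (Nat.mul_div_cancel' (Nat.dvd_lcm_left r r)) (rep (Nat.lcm r r / r) z) i = 0 := by
      intro i
      have := (Finset.sum_eq_zero_iff_of_nonneg
        (fun i _ => mul_self_nonneg _)).mp hsum i (Finset.mem_univ i)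
      exact mul_self_eq_zero.mp this
    funext n
    set k := Nat.lcm r r / r with hk
    have hrk : r * k = Nat.lcm r r := Nat.mul_div_cancel' (Nat.dvd_lcm_left r r)
    have hkpos : 0 < k := by
      rcases Nat.eq_zero_or_pos k with h0 | h0
      · exfalso; rw [h0, Nat.mul_zero] at hrk; omega
      · exact h0
    have hlt : (n : ℕ) * k < Nat.lcm r r := by
      rw [← hrk]; exact (Nat.mul_lt_mul_right hkpos).mpr n.isLt
    have hz := hall ⟨(n : ℕ) * k, hlt⟩
    simp only [recast, rep, Fin.cast] at hz
    have hval : (n : ℕ) * k / (Nat.lcm r r / r) = (n : ℕ) := Nat.mul_div_cancel _ hkpos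
    show z n = 0
    rw [← hz]
    congr 1
    exact Fin.ext hval.symm
  · intro h
    subst h
    unfold vInner
    simp [recast, rep]

/-- `d_V(x,y) = 0` iff `x ↔ y`. -/
theorem dV_eq_zero_iff {p q : ℕ} (hp : 0 < p) (hq : 0 < q)
    (x : Fin p → ℝ) (y : Fin q → ℝ) :
    dV x y = 0 ↔ vEquiv ⟨p, x⟩ ⟨q, y⟩ := by
  have ht : 0 < Nat.lcm p q := Nat.pos_of_ne_zero (Nat.lcm_ne_zero hp.ne' hq.ne')
  set t := Nat.lcm p q with htdef
  have hdp : p * (t / p) = t := Nat.mul_div_cancel' (Nat.dvd_lcm_left p q)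
  have hdq : q * (t / q) = t := Nat.mul_div_cancel' (Nat.dvd_lcm_right p q)
  have hkp : 0 < t / p := Nat.div_pos (Nat.le_of_dvd ht (Nat.dvd_lcm_left p q)) hp
  have hkq : 0 < t / q := Nat.div_pos (Nat.le_of_dvd ht (Nat.dvd_lcm_right p q)) hq
  have key : dV x y = 0 ↔ stpSub x y = 0 := by
    rw [dV, Real.sqrt_eq_zero (vInner_self_nonneg _)]
    exact vInner_self_eq_zero ht _
  rw [key]
  constructor
  · intro h
    have heq : recast hdp (rep (t / p) x) = recast hdq (rep (t / q) y) := by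
      funext n
      have := congrFun h n
      simpa [stpSub, sub_eq_zero] using this
    exact ⟨t / p, t / q, hkp, hkq,
      Sigma.ext (hdp.trans hdq.symm) (recast_inj_heq hdp hdq heq)⟩
  · rintro ⟨i, j, hi, hj, hsig⟩
    obtain ⟨hm, hheq⟩ := Sigma.mk.inj_iff.mp hsig
    simp only at hm hheq
    have g0 : recast hm (rep i x) = rep j y := heq_to_recast hm hheq
    have hdvd : t ∣ p * i := Nat.lcm_dvd (dvd_mul_right p i) (hm ▸ dvd_mul_right q j)
    obtain ⟨s, hs⟩ := hdvd
    have hspos : 0 < s := by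
      rcases Nat.eq_zero_or_pos s with h0 | h0
      · exfalso; rw [h0, Nat.mul_zero] at hs
        exact absurd hs (Nat.mul_ne_zero hp.ne' hi.ne')
      · exact h0
    have hi_eq : i = (t / p) * s := by
      apply Nat.eq_of_mul_eq_mul_left hp
      rw [hs, ← Nat.mul_assoc, hdp]
    have hj_eq : j = (t / q) * s := by
      apply Nat.eq_of_mul_eq_mul_left hq
      rw [← hm, hs, ← Nat.mul_assoc, hdq]
    funext n
    have hlt : (n : ℕ) * s < q * j := by
      rw [← hm, hs]
      exact (Nat.mul_lt_mul_right hspos).mpr n.isLt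
    have geval := congrFun g0 ⟨(n : ℕ) * s, hlt⟩
    simp only [recast, rep, Fin.cast] at geval
    have hvx : (n : ℕ) * s / i = (n : ℕ) / (t / p) := by
      rw [hi_eq]; exact Nat.mul_div_mul_right _ _ hspos
    have hvy : (n : ℕ) * s / j = (n : ℕ) / (t / q) := by
      rw [hj_eq]; exact Nat.mul_div_mul_right _ _ hspos
    show stpSub x y n = 0
    simp only [stpSub, Pi.sub_apply, recast, rep, Fin.cast, sub_eq_zero]
    exact ((congrArg x (Fin.ext hvx.symm)).trans geval).trans (congrArg y (Fin.ext hvy))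
end
end

section
/- Let ξ ∈ ℝ^m, n a positive integer, t = lcm(m,n), and Π^m_n := (n/t)(I_n ⊗ 1^T_{t/n})(I_m ⊗ 1_{t/m}) ∈ M_{n×m}. Set x₀ := Π^m_n ξ ∈ ℝ^n. Then x₀ is orthogonal to ξ − x₀ in the inner product ⟨x,y⟩_V, i.e., ⟨x₀ ⊗ 1_{t/n}, x₀ ⊗ 1_{t/n} − ξ ⊗ 1_{t/m}⟩ = 0. -/
open Matrix

noncomputable section

/-- The bridge matrix `Ψ_{n×p} = (Iₙ ⊗ 1ᵀ_{t/n})(I_p ⊗ 1_{t/p})`, `t = lcm(n,p)`,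
written entrywise:
`Ψ[i,j] = Σ_{k < t} (Iₙ ⊗ 1ᵀ_{t/n})[i,k] ⬝ (I_p ⊗ 1_{t/p})[k,j]`. -/
def Psi (n p : ℕ) : Matrix (Fin n) (Fin p) ℝ :=
  Matrix.of fun i j =>
    ∑ k : Fin (Nat.lcm n p),
      (if (k : ℕ) / (Nat.lcm n p / n) = (i : ℕ) then (1 : ℝ) else 0) *
      (if (k : ℕ) / (Nat.lcm n p / p) = (j : ℕ) then (1 : ℝ) else 0)

/-- The DK-STP of matrices : `A ⋈ B = A Ψ_{n×p} B`. -/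
def dkstp {m n p q : ℕ} (A : Matrix (Fin m) (Fin n) ℝ) (B : Matrix (Fin p) (Fin q) ℝ) :
    Matrix (Fin m) (Fin q) ℝ :=
  A * Psi n p * B

/-- The cross-dimensional projection matrix `Π^m_n = (n/t)(Iₙ ⊗ 1ᵀ_{t/n})(I_m ⊗ 1_{t/m})`. -/
def proj (m n : ℕ) : Matrix (Fin n) (Fin m) ℝ :=
  ((n : ℝ) / (Nat.lcm n m : ℝ)) • Psi n m

lemma div_lt_of_mul_eq {N A T : ℕ} (h : N * A = T) (k : Fin T) : (k : ℕ) / A < N :=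
  Nat.div_lt_of_lt_mul (by rw [Nat.mul_comm]; exact lt_of_lt_of_eq k.isLt h.symm)

lemma collapse_sum {n c : ℕ} (hc : c < n) (f : Fin n → ℝ) :
    ∑ i : Fin n, (if c = (i : ℕ) then f i else 0) = f ⟨c, hc⟩ := by
  have h := Finset.sum_ite_eq (Finset.univ : Finset (Fin n)) (⟨c, hc⟩ : Fin n) f
  simp only [Finset.mem_univ, if_true] at h
  rw [← h]
  exact Finset.sum_congr rfl fun i _ => by congr 1; simp [Fin.ext_iff]

lemma div_eq_iff_aux {a k i : ℕ} (ha : 0 < a) : k / a = i ↔ a * i ≤ k ∧ k < a * i + a := by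
  have hc : a * i = i * a := Nat.mul_comm a i
  constructor
  · rintro rfl
    have h1 := Nat.div_add_mod k a
    have h2 := Nat.mod_lt k ha
    have h3 : a * (k / a) = (k / a) * a := Nat.mul_comm _ _
    omega
  · rintro ⟨h1, h2⟩
    exact Nat.div_eq_of_lt_le (by omega) (by rw [show (i+1)*a = i*a+a by ring]; omega)

lemma count_sum {a n t : ℕ} (ha : 0 < a) (ht : n * a = t) (i : Fin n) :
    ∑ k : Fin t, (if (k : ℕ) / a = (i : ℕ) then (1 : ℝ) else 0) = (a : ℝ) := by
  rw [Fin.sum_univ_eq_sum_range (fun k => if k / a = (i : ℕ) then (1 : ℝ) else 0) t,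
    Finset.sum_boole]
  norm_cast
  have hfil : Finset.filter (fun k => k / a = (i : ℕ)) (Finset.range t)
      = Finset.Ico (a * (i : ℕ)) (a * (i : ℕ) + a) := by
    ext k
    simp only [Finset.mem_filter, Finset.mem_range, Finset.mem_Ico, div_eq_iff_aux ha]
    have hle : a * (i : ℕ) + a ≤ t := by
      calc a * (i : ℕ) + a = a * ((i : ℕ) + 1) := by ring
        _ ≤ a * n := Nat.mul_le_mul_left a i.isLt
        _ = t := by rw [← ht]; ring
    omega
  rw [hfil, Nat.card_Ico]
  omega

lemma sum_rep_mul {N A T : ℕ} (hA : 0 < A) (hNA : N * A = T) (v w : Fin N → ℝ) :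
    ∑ k : Fin T, v ⟨(k : ℕ) / A, div_lt_of_mul_eq hNA k⟩ *
      w ⟨(k : ℕ) / A, div_lt_of_mul_eq hNA k⟩ = ∑ i : Fin N, (A : ℝ) * (v i * w i) := by
  have h1 : ∀ k : Fin T, v ⟨(k : ℕ) / A, div_lt_of_mul_eq hNA k⟩ *
      w ⟨(k : ℕ) / A, div_lt_of_mul_eq hNA k⟩
      = ∑ i : Fin N, (if (k : ℕ) / A = (i : ℕ) then v i * w i else 0) := fun k =>
    (collapse_sum (div_lt_of_mul_eq hNA k) (fun i => v i * w i)).symm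
  rw [Finset.sum_congr rfl fun k _ => h1 k, Finset.sum_comm]
  refine Finset.sum_congr rfl fun i _ => ?_
  have : ∀ k : Fin T, (if (k : ℕ) / A = (i : ℕ) then v i * w i else 0)
      = (if (k : ℕ) / A = (i : ℕ) then (1:ℝ) else 0) * (v i * w i) := by
    intro k; split_ifs <;> ring
  rw [Finset.sum_congr rfl fun k _ => this k, ← Finset.sum_mul, count_sum hA hNA i]

lemma sum_cross {N A M B T : ℕ} (hNA : N * A = T) (hMB : M * B = T)
    (v : Fin N → ℝ) (w : Fin M → ℝ) :
    ∑ k : Fin T, v ⟨(k : ℕ) / A, div_lt_of_mul_eq hNA k⟩ *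
      w ⟨(k : ℕ) / B, div_lt_of_mul_eq hMB k⟩
    = ∑ i : Fin N, ∑ j : Fin M,
        (∑ k : Fin T, (if (k : ℕ) / A = (i : ℕ) then (1 : ℝ) else 0) *
          (if (k : ℕ) / B = (j : ℕ) then (1 : ℝ) else 0)) * (v i * w j) := by
  have h1 : ∀ k : Fin T, v ⟨(k : ℕ) / A, div_lt_of_mul_eq hNA k⟩ *
      w ⟨(k : ℕ) / B, div_lt_of_mul_eq hMB k⟩
      = ∑ i : Fin N, ∑ j : Fin M,
          ((if (k : ℕ) / A = (i : ℕ) then (1:ℝ) else 0) *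
            (if (k : ℕ) / B = (j : ℕ) then (1:ℝ) else 0)) * (v i * w j) := by
    intro k
    rw [← collapse_sum (div_lt_of_mul_eq hNA k) v, ← collapse_sum (div_lt_of_mul_eq hMB k) w,
      Finset.sum_mul_sum]
    refine Finset.sum_congr rfl fun i _ => Finset.sum_congr rfl fun j _ => ?_
    split_ifs <;> ring
  rw [Finset.sum_congr rfl fun k _ => h1 k, Finset.sum_comm]
  refine Finset.sum_congr rfl fun i _ => ?_
  rw [Finset.sum_comm]
  refine Finset.sum_congr rfl fun j _ => ?_
  rw [← Finset.sum_mul]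

lemma fin_sum_cast {a b : ℕ} (h : a = b) (f : ℕ → ℝ) :
    ∑ k : Fin a, f (k : ℕ) = ∑ k : Fin b, f (k : ℕ) := by subst h; rfl

/-- `x₀ = Π^m_n ξ` is orthogonal to `ξ - x₀` in the `⟨·,·⟩_V` sense:
`⟨x₀ ⊗ 1_{t/n}, x₀ ⊗ 1_{t/n} − ξ ⊗ 1_{t/m}⟩ = 0`. -/
theorem proj_orthogonal {m n : ℕ} (hm : 0 < m) (hn : 0 < n) (ξ : Fin m → ℝ) :
    let x₀ := (proj m n).mulVec ξ
    ∑ i : Fin (Nat.lcm m n),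
      recast (Nat.mul_div_cancel' (Nat.dvd_lcm_right m n)) (rep (Nat.lcm m n / n) x₀) i *
      (recast (Nat.mul_div_cancel' (Nat.dvd_lcm_right m n)) (rep (Nat.lcm m n / n) x₀) i -
        recast (Nat.mul_div_cancel' (Nat.dvd_lcm_left m n)) (rep (Nat.lcm m n / m) ξ) i) = 0 := by
  intro x₀
  have hx0 : x₀ = (proj m n).mulVec ξ := rfl
  have hnm : Nat.lcm n m = Nat.lcm m n := Nat.lcm_comm n m
  have hna : n * (Nat.lcm m n / n) = Nat.lcm m n := Nat.mul_div_cancel' (Nat.dvd_lcm_right m n)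
  have hmb : m * (Nat.lcm m n / m) = Nat.lcm m n := Nat.mul_div_cancel' (Nat.dvd_lcm_left m n)
  have htpos : 0 < Nat.lcm m n := Nat.pos_of_ne_zero (Nat.lcm_ne_zero hm.ne' hn.ne')
  have ha : 0 < Nat.lcm m n / n :=
    Nat.div_pos (Nat.le_of_dvd htpos (Nat.dvd_lcm_right m n)) hn
  set t := Nat.lcm m n with htdef
  set a := t / n with hadef
  set b := t / m with hbdef
  simp only [recast, rep, Fin.coe_cast, mul_sub]
  rw [Finset.sum_sub_distrib]
  have e1 : (∑ k : Fin t, x₀ ⟨(k : ℕ) / a, div_lt_of_mul_eq hna k⟩ *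
      x₀ ⟨(k : ℕ) / a, div_lt_of_mul_eq hna k⟩) = ∑ i : Fin n, (a : ℝ) * (x₀ i * x₀ i) :=
    sum_rep_mul ha hna x₀ x₀
  have e2 : (∑ k : Fin t, x₀ ⟨(k : ℕ) / a, div_lt_of_mul_eq hna k⟩ *
      ξ ⟨(k : ℕ) / b, div_lt_of_mul_eq hmb k⟩)
      = ∑ i : Fin n, ∑ j : Fin m,
        (∑ k : Fin t, (if (k : ℕ) / a = (i : ℕ) then (1 : ℝ) else 0) *
          (if (k : ℕ) / b = (j : ℕ) then (1 : ℝ) else 0)) * (x₀ i * ξ j) :=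
    sum_cross hna hmb x₀ ξ
  rw [e1, e2]
  have hPsi : ∀ (i : Fin n) (j : Fin m),
      (∑ k : Fin t, (if (k : ℕ) / a = (i : ℕ) then (1 : ℝ) else 0) *
        (if (k : ℕ) / b = (j : ℕ) then (1 : ℝ) else 0)) = Psi n m i j := by
    intro i j
    show _ = ∑ k : Fin (Nat.lcm n m),
      (if (k : ℕ) / (Nat.lcm n m / n) = (i : ℕ) then (1 : ℝ) else 0) *
      (if (k : ℕ) / (Nat.lcm n m / m) = (j : ℕ) then (1 : ℝ) else 0)
    rw [fin_sum_cast hnm (fun c => (if c / (Nat.lcm n m / n) = (i : ℕ) then (1 : ℝ) else 0) *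
      (if c / (Nat.lcm n m / m) = (j : ℕ) then (1 : ℝ) else 0))]
    rw [hnm]
  have hx : ∀ i : Fin n, ∑ j : Fin m, Psi n m i j * ξ j = (a : ℝ) * x₀ i := by
    intro i
    have h1 : x₀ i = ((n : ℝ) / (t : ℝ)) * ∑ j : Fin m, Psi n m i j * ξ j := by
      rw [hx0]
      simp only [proj, Matrix.mulVec, dotProduct, Matrix.smul_apply, smul_eq_mul, hnm,
        Finset.mul_sum, mul_assoc]
    rw [h1, ← mul_assoc]
    have hane : ((a : ℝ) * ((n : ℝ) / (t : ℝ))) = 1 := by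
      rw [mul_div_assoc', div_eq_one_iff_eq (by exact_mod_cast htpos.ne')]
      push_cast [← hna]
      ring
    rw [hane, one_mul]
  have e3 : ∀ i : Fin n, (∑ j : Fin m,
      (∑ k : Fin t, (if (k : ℕ) / a = (i : ℕ) then (1 : ℝ) else 0) *
        (if (k : ℕ) / b = (j : ℕ) then (1 : ℝ) else 0)) * (x₀ i * ξ j))
      = (a : ℝ) * (x₀ i * x₀ i) := by
    intro i
    have : ∀ j : Fin m, (∑ k : Fin t, (if (k : ℕ) / a = (i : ℕ) then (1 : ℝ) else 0) *
        (if (k : ℕ) / b = (j : ℕ) then (1 : ℝ) else 0)) * (x₀ i * ξ j)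
        = x₀ i * (Psi n m i j * ξ j) := by
      intro j; rw [hPsi i j]; ring
    rw [Finset.sum_congr rfl fun j _ => this j, ← Finset.mul_sum, hx i]
    ring
  rw [Finset.sum_congr rfl fun i _ => e3 i, sub_self]
end
end

section
/- Let ξ ∈ ℝ^m and Π^m_n := (n/t)(I_n ⊗ 1^T_{t/n})(I_m ⊗ 1_{t/m}) with t = lcm(m,n). Then x₀ = Π^m_n ξ minimizes ‖ξ ⊗ 1_{t/m} − x ⊗ 1_{t/n}‖ over all x ∈ ℝ^n, where ‖·‖ is the Euclidean norm on ℝ^t. -/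
open Matrix

noncomputable section

lemma pfa {m n : ℕ} (k : Fin (Nat.lcm m n)) :
    (k : ℕ) / (Nat.lcm m n / m) < m :=
  Nat.div_lt_of_lt_mul (by
    have := k.isLt
    rwa [Nat.mul_comm, Nat.mul_div_cancel' (Nat.dvd_lcm_left m n)])

lemma pfb {m n : ℕ} (k : Fin (Nat.lcm m n)) :
    (k : ℕ) / (Nat.lcm m n / n) < n :=
  Nat.div_lt_of_lt_mul (by
    have := k.isLt
    rwa [Nat.mul_comm, Nat.mul_div_cancel' (Nat.dvd_lcm_right m n)])

lemma mean_eq {m n : ℕ} (hm : 0 < m) (hn : 0 < n) (ξ : Fin m → ℝ) (j : Fin n) :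
    ((Nat.lcm m n / n : ℕ) : ℝ) * (proj m n).mulVec ξ j =
      ∑ k : Fin (Nat.lcm m n), (if (k:ℕ) / (Nat.lcm m n / n) = (j:ℕ)
        then (1:ℝ) else 0) * ξ ⟨(k:ℕ) / (Nat.lcm m n / m), pfa k⟩ := by
  have ht : 0 < Nat.lcm m n := Nat.pos_of_ne_zero (Nat.lcm_ne_zero hm.ne' hn.ne')
  simp only [proj, Psi, mulVec, dotProduct, Matrix.smul_apply, of_apply, smul_eq_mul]
  rw [Nat.lcm_comm n m]
  have h1 : ((Nat.lcm m n / n : ℕ) : ℝ) * ((n:ℝ) / (Nat.lcm m n : ℕ)) = 1 := by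
    rw [Nat.cast_div (Nat.dvd_lcm_right m n) (by exact_mod_cast hn.ne')]
    field_simp
  rw [Finset.mul_sum]
  have key : ∀ x : Fin m,
      ((Nat.lcm m n / n : ℕ) : ℝ) * (((n:ℝ) / (Nat.lcm m n : ℕ) *
        ∑ k : Fin (Nat.lcm m n),
          (if (k:ℕ) / (Nat.lcm m n / n) = (j:ℕ) then (1:ℝ) else 0) *
          (if (k:ℕ) / (Nat.lcm m n / m) = (x:ℕ) then (1:ℝ) else 0)) * ξ x) =
      (∑ k : Fin (Nat.lcm m n),
          (if (k:ℕ) / (Nat.lcm m n / n) = (j:ℕ) then (1:ℝ) else 0) *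
          (if (k:ℕ) / (Nat.lcm m n / m) = (x:ℕ) then (1:ℝ) else 0)) * ξ x := by
    intro x
    rw [← mul_assoc, ← mul_assoc, h1, one_mul]
  rw [Finset.sum_congr rfl fun x _ => key x]
  simp_rw [Finset.sum_mul]
  rw [Finset.sum_comm]
  refine Finset.sum_congr rfl fun k _ => ?_
  rw [Finset.sum_eq_single (⟨(k:ℕ) / (Nat.lcm m n / m), pfa k⟩ : Fin m)]
  · simp
  · intro x _ hx
    have h0 : (if (k:ℕ) / (Nat.lcm m n / m) = (x:ℕ) then (1:ℝ) else 0) = 0 :=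
      if_neg fun h => hx (Fin.ext h.symm)
    rw [h0, mul_zero, zero_mul]
  · intro h; exact absurd (Finset.mem_univ _) h

lemma card_block {m n : ℕ} (hm : 0 < m) (hn : 0 < n) (j : Fin n) :
    (Finset.univ.filter fun i : Fin (Nat.lcm m n) =>
      (i : ℕ) / (Nat.lcm m n / n) = (j : ℕ)).card = Nat.lcm m n / n := by
  have ht : 0 < Nat.lcm m n := Nat.pos_of_ne_zero (Nat.lcm_ne_zero hm.ne' hn.ne')
  set b := Nat.lcm m n / n with hbdef
  have hb : 0 < b := Nat.div_pos (Nat.le_of_dvd ht (Nat.dvd_lcm_right m n)) hn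
  have hnb : n * b = Nat.lcm m n := Nat.mul_div_cancel' (Nat.dvd_lcm_right m n)
  conv_rhs => rw [← Fintype.card_fin b, ← Finset.card_univ]
  refine Finset.card_nbij' (fun i => (⟨(i:ℕ) % b, Nat.mod_lt _ hb⟩ : Fin b))
    (fun r => (⟨b * (j:ℕ) + (r:ℕ), ?_⟩ : Fin (Nat.lcm m n))) ?_ ?_ ?_ ?_
  · calc b * (j:ℕ) + (r:ℕ) < b * (j:ℕ) + b := by omega
      _ = b * ((j:ℕ)+1) := by ring
      _ ≤ b * n := Nat.mul_le_mul_left b j.isLt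
      _ = n * b := Nat.mul_comm b n
      _ = Nat.lcm m n := hnb
  · intro i hi
    exact Finset.mem_univ _
  · intro r _
    simp only [Finset.mem_coe, Finset.mem_filter, Finset.mem_univ, true_and]
    rw [Nat.mul_add_div hb, Nat.div_eq_of_lt r.isLt, Nat.add_zero]
  · intro i hi
    have h := (Finset.mem_filter.mp hi).2
    apply Fin.ext
    simp only []
    rw [← h, Nat.div_add_mod]
  · intro r _
    apply Fin.ext
    simp only []
    rw [Nat.mul_add_mod, Nat.mod_eq_of_lt r.isLt]

/-- `x₀ = Π^m_n ξ` minimizes the Euclidean norm `‖ξ ⊗ 1_{t/m} − x ⊗ 1_{t/n}‖`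
over all `x ∈ ℝⁿ`. -/
theorem proj_minimizes {m n : ℕ} (hm : 0 < m) (hn : 0 < n) (ξ : Fin m → ℝ) :
    let x₀ := (proj m n).mulVec ξ
    ∀ x : Fin n → ℝ,
      Real.sqrt (∑ i : Fin (Nat.lcm m n),
        (recast (Nat.mul_div_cancel' (Nat.dvd_lcm_left m n)) (rep (Nat.lcm m n / m) ξ) i -
          recast (Nat.mul_div_cancel' (Nat.dvd_lcm_right m n)) (rep (Nat.lcm m n / n) x₀) i) ^ 2)
      ≤ Real.sqrt (∑ i : Fin (Nat.lcm m n),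
        (recast (Nat.mul_div_cancel' (Nat.dvd_lcm_left m n)) (rep (Nat.lcm m n / m) ξ) i -
          recast (Nat.mul_div_cancel' (Nat.dvd_lcm_right m n)) (rep (Nat.lcm m n / n) x) i) ^ 2) := by
  intro x₀ x
  apply Real.sqrt_le_sqrt
  have ht : 0 < Nat.lcm m n := Nat.pos_of_ne_zero (Nat.lcm_ne_zero hm.ne' hn.ne')
  set F : Fin (Nat.lcm m n) → ℝ := fun i => ξ ⟨(i:ℕ) / (Nat.lcm m n / m), pfa i⟩ with hF
  set blk : Fin (Nat.lcm m n) → Fin n := fun i => ⟨(i:ℕ) / (Nat.lcm m n / n), pfb i⟩ with hblk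
  show ∑ i : Fin (Nat.lcm m n), (F i - x₀ (blk i))^2 ≤ ∑ i : Fin (Nat.lcm m n), (F i - x (blk i))^2
  -- cross term is zero
  have hcross : ∑ i : Fin (Nat.lcm m n), (x₀ (blk i) - x (blk i)) * (F i - x₀ (blk i)) = 0 := by
    rw [← Finset.sum_fiberwise Finset.univ blk
      (fun i => (x₀ (blk i) - x (blk i)) * (F i - x₀ (blk i)))]
    apply Finset.sum_eq_zero
    intro j _
    rw [Finset.sum_congr rfl (fun i hi => by
      rw [(Finset.mem_filter.mp hi).2] :
      ∀ i ∈ Finset.univ.filter (fun i => blk i = j),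
        (x₀ (blk i) - x (blk i)) * (F i - x₀ (blk i)) = (x₀ j - x j) * (F i - x₀ j))]
    rw [← Finset.mul_sum, Finset.sum_sub_distrib, Finset.sum_const, nsmul_eq_mul]
    have hfilter_eq : (Finset.univ.filter fun i : Fin (Nat.lcm m n) => blk i = j) =
        (Finset.univ.filter fun i : Fin (Nat.lcm m n) => (i:ℕ) / (Nat.lcm m n / n) = (j:ℕ)) := by
      apply Finset.filter_congr
      intro i _
      simp [hblk, Fin.ext_iff]
    have hsumF : ∑ i ∈ Finset.univ.filter (fun i => blk i = j), F i =
        ((Nat.lcm m n / n : ℕ) : ℝ) * x₀ j := by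
      rw [hfilter_eq, Finset.sum_filter, mean_eq hm hn ξ j]
      exact Finset.sum_congr rfl fun k _ => by by_cases h : (k:ℕ)/(Nat.lcm m n / n) = (j:ℕ) <;>
        simp [h, hF]
    rw [hsumF, hfilter_eq, card_block hm hn j, sub_self, mul_zero]
  have expand : ∀ i : Fin (Nat.lcm m n), (F i - x (blk i))^2 =
      (F i - x₀ (blk i))^2 + 2 * ((x₀ (blk i) - x (blk i)) * (F i - x₀ (blk i)))
        + (x₀ (blk i) - x (blk i))^2 := fun i => by ring
  calc ∑ i : Fin (Nat.lcm m n), (F i - x₀ (blk i))^2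
      ≤ ∑ i : Fin (Nat.lcm m n), (F i - x₀ (blk i))^2
        + ∑ i : Fin (Nat.lcm m n), (x₀ (blk i) - x (blk i))^2 :=
        le_add_of_nonneg_right (Finset.sum_nonneg fun i _ => sq_nonneg _)
    _ = ∑ i : Fin (Nat.lcm m n), (F i - x (blk i))^2 := by
        simp_rw [expand, Finset.sum_add_distrib, ← Finset.mul_sum, hcross, mul_zero, add_zero]
end
end

section
/- Let Ψ_{m×n} denote the bridge matrix (I_m ⊗ 1^T_{t/m})(I_n ⊗ 1_{t/n}) with t = lcm(m,n). Then Ψ_{n×n} = I_n, and rank(Ψ_{m×n}) = min(m,n). -/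
open Matrix Finset

noncomputable section

lemma Psi_apply (m n : ℕ) (i : Fin m) (j : Fin n) :
    Psi m n i j = ∑ k ∈ Finset.range (Nat.lcm m n),
      (if k / (Nat.lcm m n / m) = (i : ℕ) then (1 : ℝ) else 0) *
      (if k / (Nat.lcm m n / n) = (j : ℕ) then (1 : ℝ) else 0) := by
  rw [Psi, Matrix.of_apply]
  exact Fin.sum_univ_eq_sum_range
    (fun k => (if k / (Nat.lcm m n / m) = (i : ℕ) then (1 : ℝ) else 0) *
      (if k / (Nat.lcm m n / n) = (j : ℕ) then (1 : ℝ) else 0)) (Nat.lcm m n)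

lemma Psi_self (n : ℕ) (hn : 0 < n) : Psi n n = (1 : Matrix (Fin n) (Fin n) ℝ) := by
  ext i j
  rw [Psi_apply, Nat.lcm_self, Nat.div_self hn]
  simp only [Nat.div_one]
  rw [Finset.sum_eq_single (i : ℕ)]
  · simp [Matrix.one_apply, Fin.ext_iff, eq_comm]
  · intro k _ hk
    simp [hk]
  · intro h
    exact absurd (Finset.mem_range.2 i.isLt) h

/-- The key combinatorial fact: a function constant on blocks of length `a`
whose sums over all blocks of length `b ≤ a` vanish, is zero. -/
lemma key_lemma (a b m n : ℕ) (hb : 0 < b) (hba : b ≤ a)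
    (ht : m * a = n * b) (c : ℕ → ℝ) (hc : ∀ i, m ≤ i → c i = 0)
    (hsum : ∀ j < n, ∑ k ∈ Finset.Ico (j * b) (j * b + b), c (k / a) = 0) :
    ∀ i, c i = 0 := by
  have ha : 0 < a := lt_of_lt_of_le hb hba
  set S : ℕ → ℝ := fun x => ∑ k ∈ Finset.range x, c (k / a) with hSdef
  have hlin : ∀ i x y, i * a ≤ x → x ≤ y → y ≤ (i + 1) * a →
      S y = S x + ((y - x : ℕ) : ℝ) * c i := by
    intro i x y hx hxy hy
    have h1 : S y = S x + ∑ k ∈ Finset.Ico x y, c (k / a) := by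
      rw [hSdef]
      exact (Finset.sum_range_add_sum_Ico _ hxy).symm
    have h2 : ∑ k ∈ Finset.Ico x y, c (k / a) = ((y - x : ℕ) : ℝ) * c i := by
      rw [Finset.sum_congr rfl (fun k hk => ?_), Finset.sum_const, Nat.card_Ico,
        nsmul_eq_mul]
      have hk' := Finset.mem_Ico.1 hk
      rw [Nat.div_eq_of_lt_le (le_trans hx hk'.1) (lt_of_lt_of_le hk'.2 hy)]
    rw [h1, h2]
  have hS0 : ∀ j ≤ n, S (j * b) = 0 := by
    intro j
    induction j with
    | zero => intro _; simp [hSdef]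
    | succ j ih =>
      intro hj
      have hjn : j < n := hj
      have : S ((j + 1) * b) = S (j * b) + ∑ k ∈ Finset.Ico (j * b) (j * b + b), c (k / a) := by
        rw [hSdef]
        have : (j + 1) * b = j * b + b := by ring
        rw [this]
        exact (Finset.sum_range_add_sum_Ico _ (Nat.le_add_right _ _)).symm
      rw [this, ih (le_of_lt hjn), hsum j hjn, zero_add]
  have main : ∀ d i, m ≤ i + d → c i = 0 := by
    intro d
    induction d with
    | zero => intro i h; exact hc i (by omega)
    | succ d ih =>
      intro i h
      by_cases hm' : m ≤ i + d
      · exact ih i hm'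
      have hpm : i + 1 ≤ m := by omega
      have hcp : c (i + 1) = 0 := by
        by_cases h1 : i + 1 < m
        · exact ih (i + 1) (by omega)
        · exact hc _ (by omega)
      have hsucc : (i + 1) * a = i * a + a := by ring
      by_cases hdvd : b ∣ (i + 1) * a
      · obtain ⟨j, hj⟩ := hdvd
        have hjb : (i + 1) * a = j * b := by rw [hj]; ring
        have hjn : j ≤ n := by
          by_contra hcon
          push_neg at hcon
          have h1 : (i + 1) * a ≤ m * a := Nat.mul_le_mul_right a hpm
          have h2 : n * b < j * b := (Nat.mul_lt_mul_right hb).2 hcon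
          omega
        have hjpos : 0 < j := by
          rcases Nat.eq_zero_or_pos j with h0 | h
          · subst h0; simp at hjb; omega
          · exact h
        have hprev : (j - 1) * b = j * b - b := by
          cases j with
          | zero => omega
          | succ j' =>
            have h' : (j' + 1) * b = j' * b + b := by ring
            simp only [Nat.add_sub_cancel]
            omega
        have h1 : S (j * b) = 0 := hS0 j hjn
        have h2 : S ((j - 1) * b) = 0 := hS0 _ (by omega)
        have hb1 : 0 < j * b := by
          have := Nat.mul_le_mul_right b hjpos
          omega
        have hx1 : i * a ≤ (j - 1) * b := by omega
        have hx2 : (j - 1) * b ≤ j * b := by omega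
        have hx3 : j * b ≤ (i + 1) * a := by omega
        have := hlin i ((j - 1) * b) (j * b) hx1 hx2 hx3
        rw [h1, h2, zero_add] at this
        have hbb : (j * b - (j - 1) * b : ℕ) = b := by omega
        rw [hbb] at this
        have : (b : ℝ) * c i = 0 := this.symm
        rcases mul_eq_zero.1 this with h | h
        · exact absurd h (by exact_mod_cast hb.ne')
        · exact h
      · obtain ⟨j, s, heq, hsb, hspos⟩ :
            ∃ j s, j * b + s = (i + 1) * a ∧ s < b ∧ 0 < s := by
          refine ⟨(i + 1) * a / b, (i + 1) * a % b, ?_, Nat.mod_lt _ hb, ?_⟩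
          · have := Nat.mod_add_div' ((i + 1) * a) b
            omega
          · rcases Nat.eq_zero_or_pos ((i + 1) * a % b) with h0 | h
            · exact absurd (Nat.dvd_of_mod_eq_zero h0) hdvd
            · exact h
        have hjb1 : j * b < (i + 1) * a := by omega
        have hjb' : (j + 1) * b = j * b + b := by ring
        have hjb2 : (i + 1) * a < (j + 1) * b := by omega
        have hipm : i + 1 < m := by
          rcases lt_or_eq_of_le hpm with h' | h'
          · exact h'
          · exfalso
            apply hdvd
            rw [h', ht]
            exact Dvd.intro n (by ring)
        have hsucc2 : (i + 1 + 1) * a = (i + 1) * a + a := by ring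
        have hj1n : j + 1 ≤ n := by
          by_contra hcon
          push_neg at hcon
          have h1 : (i + 1) * a ≤ m * a := Nat.mul_le_mul_right a hpm
          have h2 : n * b ≤ j * b := Nat.mul_le_mul_right b (by omega)
          omega
        have hS1 : S (j * b) = 0 := hS0 j (by omega)
        have hS2 : S ((j + 1) * b) = 0 := hS0 _ hj1n
        have e1 := hlin i (j * b) ((i + 1) * a) (by omega) (le_of_lt hjb1) (le_refl _)
        have e2 := hlin (i + 1) ((i + 1) * a) ((j + 1) * b) (le_refl _)
          (le_of_lt hjb2) (by omega)
        rw [hS1, zero_add] at e1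
        rw [hS2, hcp, mul_zero, add_zero] at e2
        rw [← e2] at e1
        have hdx : 0 < (i + 1) * a - j * b := by omega
        have : ((((i + 1) * a - j * b : ℕ) : ℝ)) * c i = 0 := e1.symm
        rcases mul_eq_zero.1 this with h | h
        · exact absurd h (by exact_mod_cast hdx.ne')
        · exact h
  intro i
  exact main m i (by omega)

lemma Psi_transpose (m n : ℕ) : (Psi m n)ᵀ = Psi n m := by
  ext j i
  rw [Matrix.transpose_apply, Psi_apply, Psi_apply, Nat.lcm_comm n m]
  exact Finset.sum_congr rfl fun k _ => mul_comm _ _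

lemma rank_Psi_of_le (m n : ℕ) (hm : 0 < m) (hn : 0 < n) (hmn : m ≤ n) :
    (Psi m n).rank = m := by
  set t := Nat.lcm m n with htdef
  set a := t / m with hadef
  set b := t / n with hbdef
  have hma : m * a = t := Nat.mul_div_cancel' (Nat.dvd_lcm_left m n)
  have hnb : n * b = t := Nat.mul_div_cancel' (Nat.dvd_lcm_right m n)
  have htpos : 0 < t := Nat.pos_of_ne_zero (Nat.lcm_ne_zero hm.ne' hn.ne')
  have hbpos : 0 < b := Nat.div_pos (Nat.le_of_dvd htpos (Nat.dvd_lcm_right m n)) hn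
  have hba : b ≤ a := Nat.div_le_div_left hmn hm
  have hinj : Function.Injective ((Psi m n)ᵀ.mulVecLin) := by
    rw [← LinearMap.ker_eq_bot, LinearMap.ker_eq_bot']
    intro v hv
    set c : ℕ → ℝ := fun i => if h : i < m then v ⟨i, h⟩ else 0 with hcdef
    have hzero : ∀ i, c i = 0 := by
      apply key_lemma a b m n hbpos hba (by rw [hma, hnb]) c
        (fun i h => dif_neg (by omega))
      intro j hj
      have hvj := congrFun hv ⟨j, hj⟩
      rw [Matrix.mulVecLin_apply, Matrix.mulVec, dotProduct] at hvj
      simp only [Matrix.transpose_apply, Pi.zero_apply] at hvj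
      have step1 : ∑ i : Fin m, Psi m n i ⟨j, hj⟩ * v i
          = ∑ k ∈ Finset.range t, (if k / b = j then (1 : ℝ) else 0) * c (k / a) := by
        calc ∑ i : Fin m, Psi m n i ⟨j, hj⟩ * v i
            = ∑ i : Fin m, ∑ k ∈ Finset.range t,
              ((if k / a = (i : ℕ) then (1 : ℝ) else 0) *
               (if k / b = j then (1 : ℝ) else 0)) * v i := by
              refine Finset.sum_congr rfl fun i _ => ?_
              rw [Psi_apply, Finset.sum_mul]
          _ = ∑ k ∈ Finset.range t, ∑ i : Fin m,
              ((if k / a = (i : ℕ) then (1 : ℝ) else 0) *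
               (if k / b = j then (1 : ℝ) else 0)) * v i := Finset.sum_comm
          _ = ∑ k ∈ Finset.range t, (if k / b = j then (1 : ℝ) else 0) *
              ∑ i : Fin m, (if k / a = (i : ℕ) then (1 : ℝ) else 0) * v i := by
              refine Finset.sum_congr rfl fun k _ => ?_
              rw [Finset.mul_sum]
              exact Finset.sum_congr rfl fun i _ => by ring
          _ = ∑ k ∈ Finset.range t, (if k / b = j then (1 : ℝ) else 0) * c (k / a) := by
              refine Finset.sum_congr rfl fun k _ => ?_
              congr 1
              by_cases h : k / a < m
              · rw [Finset.sum_eq_single (⟨k / a, h⟩ : Fin m)]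
                · simp [hcdef, h]
                · intro i _ hi
                  rw [if_neg, zero_mul]
                  intro hcon
                  exact hi (by ext; simp [← hcon])
                · intro hcon
                  exact absurd (Finset.mem_univ _) hcon
              · rw [Finset.sum_eq_zero, hcdef]
                · simp [h]
                · intro i _
                  rw [if_neg, zero_mul]
                  intro hcon
                  exact h (hcon ▸ i.isLt)
      have step2 : ∑ k ∈ Finset.range t, (if k / b = j then (1 : ℝ) else 0) * c (k / a)
          = ∑ k ∈ Finset.Ico (j * b) (j * b + b), c (k / a) := by
        simp only [ite_mul, one_mul, zero_mul]
        rw [← Finset.sum_filter]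
        congr 1
        · ext k
          simp only [Finset.mem_filter, Finset.mem_range, Finset.mem_Ico]
          constructor
          · rintro ⟨hkt, hkj⟩
            have h1 : k / b * b ≤ k := Nat.div_mul_le_self k b
            have h2 := Nat.mod_add_div' k b
            have h3 := Nat.mod_lt k hbpos
            rw [hkj] at h1 h2
            omega
          · rintro ⟨h1, h2⟩
            have hjb : j * b + b = (j + 1) * b := by ring
            have hkb : k / b = j := Nat.div_eq_of_lt_le h1 (by omega)
            have hkt : k < t := by
              have : (j + 1) * b ≤ n * b := Nat.mul_le_mul_right b (by omega)
              omega
            exact ⟨hkt, hkb⟩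
      rw [step1, step2] at hvj
      exact hvj
    funext i
    have := hzero i
    rw [hcdef] at this
    simpa [i.isLt] using this
  have h1 : ((Psi m n)ᵀ).rank = m := by
    rw [Matrix.rank, LinearMap.finrank_range_of_inj hinj, Module.finrank_fin_fun]
  rw [← Matrix.rank_transpose, h1]

/-- The bridge matrices satisfy `Ψ_{n×n} = Iₙ` and `rank Ψ_{m×n} = min(m,n)`. -/
theorem Psi_bridge_axioms (m n : ℕ) (hm : 0 < m) (hn : 0 < n) :
    Psi n n = (1 : Matrix (Fin n) (Fin n) ℝ) ∧ (Psi m n).rank = min m n := by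
  refine ⟨Psi_self n hn, ?_⟩
  rcases le_total m n with h | h
  · rw [rank_Psi_of_le m n hm hn h, min_eq_left h]
  · rw [← Matrix.rank_transpose, Psi_transpose, rank_Psi_of_le n m hn hm h, min_eq_right h]
end
end

section
/- Generalized Cayley–Hamilton theorem: Let A ∈ M_{m×n}, Π_A = AΨ_{n×m} ∈ M_{m×m}, and let p(x) = x^m + c_{m−1}x^{m−1} + ⋯ + c_1 x + c_0 be the characteristic polynomial of Π_A. Define A^⟨k⟩ := A ⋈ ⋯ ⋈ A (k factors, A^⟨1⟩ = A). Then A^⟨m+1⟩ + c_{m−1}A^⟨m⟩ + ⋯ + c_1 A^⟨2⟩ + c_0 A = 0. -/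
open Matrix

noncomputable section

/-- `A^⟨k+1⟩ = A ⋈ ⋯ ⋈ A` (`k+1` factors): `dkpow A k = A^⟨k+1⟩`. -/
def dkpow {m n : ℕ} (A : Matrix (Fin m) (Fin n) ℝ) : ℕ → Matrix (Fin m) (Fin n) ℝ
  | 0 => A
  | k + 1 => dkstp A (dkpow A k)

lemma dkpow_eq {m n : ℕ} (A : Matrix (Fin m) (Fin n) ℝ) (k : ℕ) :
    dkpow A k = (A * Psi n m) ^ k * A := by
  induction k with
  | zero => simp [dkpow]
  | succ k ih => rw [dkpow, dkstp, ih, pow_succ', ← Matrix.mul_assoc]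

/-- Generalized Cayley–Hamilton theorem: if
`p(x) = xᵐ + c_{m−1}x^{m−1} + ⋯ + c₀` is the characteristic polynomial of
`Π_A = AΨ_{n×m}`, then `A^⟨m+1⟩ + c_{m−1}A^⟨m⟩ + ⋯ + c₁A^⟨2⟩ + c₀A = 0`. -/
theorem dk_cayley_hamilton {m n : ℕ} (A : Matrix (Fin m) (Fin n) ℝ) :
    dkpow A m +
      ∑ i ∈ Finset.range m, ((A * Psi n m).charpoly.coeff i) • dkpow A i = 0 := by
  set P := A * Psi n m with hP
  have h := P.aeval_self_charpoly
  rw [P.charpoly_monic.as_sum] at h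
  have hdim : P.charpoly.natDegree = m := by
    simpa using P.charpoly_natDegree_eq_dim
  rw [hdim] at h
  simp only [map_add, map_pow, Polynomial.aeval_X, map_sum, _root_.map_mul,
    Polynomial.aeval_C] at h
  have h' : P ^ m + ∑ i ∈ Finset.range m, (P.charpoly.coeff i) • P ^ i = 0 := by
    simpa only [Algebra.smul_def] using h
  calc dkpow A m + ∑ i ∈ Finset.range m, ((A * Psi n m).charpoly.coeff i) • dkpow A i
      = (P ^ m + ∑ i ∈ Finset.range m, (P.charpoly.coeff i) • P ^ i) * A := by
        rw [Matrix.add_mul, Matrix.sum_mul, dkpow_eq]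
        congr 1
        refine Finset.sum_congr rfl fun i _ => ?_
        rw [dkpow_eq, Matrix.smul_mul]
    _ = 0 := by rw [h', Matrix.zero_mul]
end
end
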